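/- If for each fixed z the conditional probability path p_t(x|z) and conditional vector field u_t(x|z) satisfy the continuity equation ∂_t p_t(x|z) + ∇_x·(u_t(x|z) p_t(x|z)) = 0, and the marginal path is p_t(x) = ∫ p_t(x|z) q(z) dz with marginal field u_t(x) = ∫ u_t(x|z) p_t(x|z) q(z) dz / p_t(x), then p_t and u_t satisfy the continuity equation ∂_t p_t(x) + ∇_x·(u_t(x) p_t(x)) = 0 at every point where p_t(x) > 0, assuming sufficient smoothness and integrability to differentiate under the integral sign. -/
import Mathlib


open MeasureTheory

/-- The divergence `∇·F` of a vector field `F : ℝ^d → ℝ^d` at a point `x`,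
as the sum of the coordinate partial derivatives. -/
noncomputable def divg {d : ℕ} (F : EuclideanSpace ℝ (Fin d) → EuclideanSpace ℝ (Fin d))
    (x : EuclideanSpace ℝ (Fin d)) : ℝ :=
  ∑ i, fderiv ℝ F x (EuclideanSpace.single i 1) i

/-- If for each `z` the conditional path `p_t(·|z)` and conditional field
`u_t(·|z)` satisfy the continuity equation, and the marginal path is
`P_t(x) = ∫ p_t(x|z) q(z) dz` with marginal field
`U_t(x) = (∫ u_t(x|z) p_t(x|z) q(z) dz) / P_t(x)`, then, assuming differentiation under
the integral sign is valid (hypotheses `hdt`, `hdx`), the marginal pair satisfies the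
continuity equation `∂_t P_t(x) + ∇·(U_t P_t)(x) = 0` at every point where `P_t(x) > 0`. -/
theorem stmt_0 (d m : ℕ)
    (p : ℝ → EuclideanSpace ℝ (Fin d) → (Fin m → ℝ) → ℝ)
    (u : ℝ → EuclideanSpace ℝ (Fin d) → (Fin m → ℝ) → EuclideanSpace ℝ (Fin d))
    (q : (Fin m → ℝ) → ℝ)
    (hq0 : ∀ z, 0 ≤ q z) (hq1 : (∫ z, q z) = 1)
    (hcond : ∀ z t x,
      deriv (fun s => p s x z) t + divg (fun y => p t y z • u t y z) x = 0)
    (P : ℝ → EuclideanSpace ℝ (Fin d) → ℝ)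
    (hPdef : ∀ t x, P t x = ∫ z, p t x z * q z)
    (U : ℝ → EuclideanSpace ℝ (Fin d) → EuclideanSpace ℝ (Fin d))
    (hUdef : ∀ t x, U t x = (P t x)⁻¹ • ∫ z, (p t x z * q z) • u t x z)
    -- differentiation under the integral sign in `t`:
    (hdt : ∀ t x, deriv (fun s => P s x) t = ∫ z, deriv (fun s => p s x z) t * q z)
    -- differentiation under the integral sign in `x`:
    (hdx : ∀ t x, divg (fun y => P t y • U t y) x
      = ∫ z, divg (fun y => p t y z • u t y z) x * q z) :
    ∀ t x, 0 < P t x →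
      deriv (fun s => P s x) t + divg (fun y => P t y • U t y) x = 0 := by
  intro t x _
  rw [hdt, hdx]
  have h : ∀ z, divg (fun y => p t y z • u t y z) x * q z
      = -(deriv (fun s => p s x z) t * q z) := by
    intro z
    have h2 : divg (fun y => p t y z • u t y z) x = -deriv (fun s => p s x z) t := by
      linarith [hcond z t x]
    rw [h2]; ring
  simp_rw [h, integral_neg]
  ring
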